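/- arXiv:1708.08775 — 3 statements merged into one kernel-verified Lean document; each statement's English description precedes it below -/
import Mathlib

section
/- If ε = (ε₁,...,ε_N) is a k-wise independent Rademacher vector with k even, p ≥ k ≥ 2, and a ∈ ℝ^N, then (E|∑ᵢ aᵢεᵢ|^p)^{1/p} ≤ C(k)^{k/p} · N^{1/2 − k/(2p)} · ‖a‖₂, where C(k) is the optimal constant in the classical Khintchine inequality for exponent k. -/
open MeasureTheory ENNReal

noncomputable section

/-- A family `ε` of ±1-valued (Rademacher) random variables which is `k`-wise independent:
every collection of at most `k` coordinates takes any prescribed pattern of signs with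
probability `(1/2)^(number of coordinates)`. -/
def IsKWiseRademacher {Ω : Type*} [MeasurableSpace Ω] (μ : Measure Ω)
    {ι : Type*} [DecidableEq ι] (k : ℕ) (ε : ι → Ω → ℝ) : Prop :=
  (∀ i, Measurable (ε i)) ∧
  ∀ s : Finset ι, s.card ≤ k → ∀ σ : ι → ℝ, (∀ i, σ i = 1 ∨ σ i = -1) →
    μ {ω | ∀ i ∈ s, ε i ω = σ i} = (2 : ℝ≥0∞)⁻¹ ^ s.card

/-- The optimal constant in the classical Khintchine inequality with (even) exponent `k`;
for even `k` one has `C(k)^k = (k-1)!! = k! / (2^(k/2) (k/2)!)`. -/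
def khintchineConst (k : ℕ) : ℝ :=
  ((Nat.factorial k : ℝ) / (2 ^ (k / 2) * Nat.factorial (k / 2))) ^ ((k : ℝ)⁻¹)

/-!
Each `ε i` is `±1` almost surely, so by Cauchy–Schwarz `|∑ aᵢ εᵢ| ≤ √N ‖a‖₂` pointwise.
Expanding the `k`-th power, every monomial involves at most `k` of the `εᵢ`, so `k`-wise
independence makes `E (∑ aᵢ εᵢ)^k` equal to its value for independent signs: the sum of
`multinomial(m) aᵐ` over the multi-indices `m` with all entries even, which is at most
`(k-1)!! ‖a‖₂^k = C(k)^k ‖a‖₂^k`. The bound for `p ≥ k` interpolates between these two: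
`E|S|^p ≤ ‖S‖_∞^(p-k) E|S|^k`.
-/

open Finset Nat

theorem Nat.multinomial_two_nsmul_mul_le {ι : Type*} (s : Finset ι) (n : ι → ℕ) :
    multinomial s (2 • n) * (2 ^ (∑ i ∈ s, n i) * (∑ i ∈ s, n i)!) ≤
      (2 * ∑ i ∈ s, n i)! * multinomial s n := by
  refine Nat.le_of_mul_le_mul_left ?_ (prod_pos (s := s) fun i _ ↦ factorial_pos (2 * n i))
  have hprod : 2 ^ (∑ i ∈ s, n i) * ∏ i ∈ s, (n i)! ≤ ∏ i ∈ s, (2 * n i)! := by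
    rw [← prod_pow_eq_pow_sum, ← prod_mul_distrib]
    exact prod_le_prod' fun i _ ↦ two_pow_mul_factorial_le_factorial_two_mul (n i)
  calc (∏ i ∈ s, (2 * n i)!) * (multinomial s (2 • n) * (2 ^ (∑ i ∈ s, n i) * (∑ i ∈ s, n i)!))
      = (2 * ∑ i ∈ s, n i)! * (2 ^ (∑ i ∈ s, n i) * ((∏ i ∈ s, (n i)!) * multinomial s n)) := by
        have := multinomial_spec s (2 • n)
        simp only [Pi.smul_apply, smul_eq_mul, ← mul_sum] at this
        rw [multinomial_spec, ← mul_assoc, this]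
    _ ≤ (2 * ∑ i ∈ s, n i)! * ((∏ i ∈ s, (2 * n i)!) * multinomial s n) := by
        rw [← mul_assoc (2 ^ _)]
        gcongr
    _ = (∏ i ∈ s, (2 * n i)!) * ((2 * ∑ i ∈ s, n i)! * multinomial s n) := by ring

theorem sum_multinomial_two_nsmul_mul_prod_pow_le {ι : Type*} [Fintype ι] [DecidableEq ι]
    {b : ι → ℝ} (hb : ∀ i, 0 ≤ b i) (r : ℕ) :
    ∑ n ∈ piAntidiag univ r, (multinomial univ (2 • n) : ℝ) * ∏ i, b i ^ n i ≤
      (2 * r)! / (2 ^ r * r !) * (∑ i, b i) ^ r := by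
  rw [sum_pow_eq_sum_piAntidiag, mul_sum]
  refine sum_le_sum fun n hn ↦ ?_
  obtain rfl := (mem_piAntidiag.1 hn).1
  rw [← mul_assoc]
  refine mul_le_mul_of_nonneg_right ?_ (prod_nonneg fun i _ ↦ pow_nonneg (hb i) _)
  rw [div_mul_eq_mul_div, le_div_iff₀ (by positivity)]
  exact_mod_cast multinomial_two_nsmul_mul_le univ n

theorem prod_eq_sum_powerset_of_eq_one_or_neg_one {ι : Type*} [DecidableEq ι] {t : Finset ι}
    {x : ι → ℝ} (hx : ∀ i ∈ t, x i = 1 ∨ x i = -1) :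
    ∏ i ∈ t, x i = ∑ u ∈ t.powerset,
      if ∀ i ∈ t, x i = if i ∈ u then 1 else -1 then (-1 : ℝ) ^ #(t \ u) else 0 := by
  -- `x i = [x i = 1] - [x i = -1]`; expanding the product leaves one sign pattern per subset.
  rw [prod_congr rfl fun i hi ↦ show x i =
    (if x i = 1 then 1 else 0) + (if x i = -1 then -1 else 0) by
      rcases hx i hi with h | h <;> norm_num [h], prod_add]
  refine sum_congr rfl fun u hu ↦ ?_
  rw [prod_ite_zero, prod_ite_zero, ite_zero_mul_ite_zero]
  simp only [prod_const_one, prod_const, one_mul]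
  congr 1
  grind

namespace IsKWiseRademacher

variable {Ω ι : Type*} [MeasurableSpace Ω] {μ : Measure Ω} [IsProbabilityMeasure μ]
  [DecidableEq ι] {k : ℕ} {ε : ι → Ω → ℝ}

theorem ae_eq_one_or_neg_one (hε : IsKWiseRademacher μ k ε) (hk : k ≠ 0) (i : ι) :
    ∀ᵐ ω ∂μ, ε i ω = 1 ∨ ε i ω = -1 := by
  have hsingle (s : ℝ) (hs : s = 1 ∨ s = -1) : μ (ε i ⁻¹' {s}) = 2⁻¹ := by
    simpa [Set.preimage] using
      hε.2 {i} (by simpa [Nat.one_le_iff_ne_zero]) (fun _ ↦ s) (fun _ ↦ hs)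
  have hmeas (s : ℝ) : MeasurableSet (ε i ⁻¹' {s}) := hε.1 i (measurableSet_singleton s)
  refine (ae_iff_measure_eq ((hmeas 1).union (hmeas (-1))).nullMeasurableSet).2 ?_
  change μ (ε i ⁻¹' {1} ∪ ε i ⁻¹' {-1}) = μ Set.univ
  rw [measure_union ((Set.disjoint_singleton.2 (by norm_num)).preimage _) (hmeas _),
    hsingle 1 (.inl rfl), hsingle (-1) (.inr rfl), ENNReal.inv_two_add_inv_two, measure_univ]

theorem ae_forall_eq_one_or_neg_one [Countable ι] (hε : IsKWiseRademacher μ k ε) (hk : k ≠ 0) :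
    ∀ᵐ ω ∂μ, ∀ i, ε i ω = 1 ∨ ε i ω = -1 :=
  ae_all_iff.2 (hε.ae_eq_one_or_neg_one hk)

theorem integral_prod (hε : IsKWiseRademacher μ k ε) {t : Finset ι} (ht : #t ≤ k) :
    ∫ ω, ∏ i ∈ t, ε i ω ∂μ = 0 ^ #t := by
  set E : Finset ι → Set Ω := fun u ↦ {ω | ∀ i ∈ t, ε i ω = if i ∈ u then 1 else -1}
  have hE (u : Finset ι) : MeasurableSet (E u) := by
    simp only [E, Set.ofPred_forall]
    exact .biInter t.countable_toSet fun i _ ↦ hε.1 i (measurableSet_singleton _)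
  have hexpand : (fun ω ↦ ∏ i ∈ t, ε i ω) =ᵐ[μ]
      fun ω ↦ ∑ u ∈ t.powerset, (E u).indicator (fun _ ↦ (-1 : ℝ) ^ #(t \ u)) ω := by
    filter_upwards [(Filter.eventually_all_finset t).2 fun i hi ↦ hε.ae_eq_one_or_neg_one
      (by have := card_pos.2 ⟨i, hi⟩; omega) i] with ω hω
    simp only [Set.indicator_apply, E, Set.mem_ofPred_eq]
    exact prod_eq_sum_powerset_of_eq_one_or_neg_one hω
  have hμE (u : Finset ι) : μ.real (E u) = 2⁻¹ ^ #t := by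
    rw [measureReal_def, hε.2 t ht _ fun i ↦ by split_ifs <;> simp]
    simp
  rw [integral_congr_ae hexpand,
    integral_finsetSum _ fun u _ ↦ (integrable_const _).indicator (hE u)]
  simp only [integral_indicator_const _ (hE _), hμE, smul_eq_mul, ← mul_sum]
  calc 2⁻¹ ^ #t * ∑ u ∈ t.powerset, (-1 : ℝ) ^ #(t \ u)
      = 2⁻¹ ^ #t * ∏ _i ∈ t, (1 + -1 : ℝ) := by rw [prod_add]; simp
    _ = 0 ^ #t := by rcases eq_or_ne #t 0 with h | h <;> simp [h]

variable [Fintype ι]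

theorem ae_prod_pow_eq (hε : IsKWiseRademacher μ k ε) (hk : k ≠ 0) (m : ι → ℕ) :
    ∀ᵐ ω ∂μ, ∏ i, ε i ω ^ m i = ∏ i with Odd (m i), ε i ω := by
  filter_upwards [hε.ae_forall_eq_one_or_neg_one hk] with ω hω
  rw [prod_filter]
  refine prod_congr rfl fun i _ ↦ ?_
  rcases hω i with h | h <;> rw [h]
  · simp
  · split_ifs with hodd
    exacts [hodd.neg_one_pow, (Nat.not_odd_iff_even.1 hodd).neg_one_pow]

theorem integrable_prod_pow (hε : IsKWiseRademacher μ k ε) (hk : k ≠ 0) (m : ι → ℕ) :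
    Integrable (fun ω ↦ ∏ i, ε i ω ^ m i) μ := by
  have hmeas := hε.1
  refine .of_bound (by fun_prop) 1 ?_
  filter_upwards [hε.ae_forall_eq_one_or_neg_one hk] with ω hω
  rw [norm_prod]
  exact (prod_eq_one fun i _ ↦ by rcases hω i with h | h <;> simp [h]).le

theorem integral_prod_pow (hε : IsKWiseRademacher μ k ε) (hk : k ≠ 0) {m : ι → ℕ}
    (hm : ∑ i, m i ≤ k) : ∫ ω, ∏ i, ε i ω ^ m i ∂μ = if ∀ i, Even (m i) then 1 else 0 := by
  have hodd : #{i | Odd (m i)} ≤ k := by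
    refine le_trans ?_ ((sum_le_sum_of_subset (filter_subset (fun i ↦ Odd (m i)) univ)).trans hm)
    simpa using card_nsmul_le_sum _ m 1 fun i hi ↦ (mem_filter.1 hi).2.pos
  rw [integral_congr_ae (hε.ae_prod_pow_eq hk m), hε.integral_prod hodd]
  simp [zero_pow_eq, filter_eq_empty_iff]

theorem integral_sum_mul_pow_two_mul (hε : IsKWiseRademacher μ k ε) (hk : k ≠ 0) (a : ι → ℝ)
    {r : ℕ} (hr : 2 * r ≤ k) :
    ∫ ω, (∑ i, a i * ε i ω) ^ (2 * r) ∂μ =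
      ∑ n ∈ piAntidiag univ r, (multinomial univ (2 • n) : ℝ) * ∏ i, (a i ^ 2) ^ n i := by
  simp_rw [sum_pow_eq_sum_piAntidiag, mul_pow, prod_mul_distrib, ← mul_assoc]
  rw [integral_finsetSum _ fun m _ ↦ (hε.integrable_prod_pow hk m).const_mul _]
  simp_rw [integral_const_mul]
  rw [sum_congr rfl fun m hm ↦ by
    rw [hε.integral_prod_pow hk ((mem_piAntidiag.1 hm).1.trans_le hr), mul_ite, mul_one, mul_zero]]
  simp_rw [← sum_filter, even_iff_two_dvd]
  rw [← map_nsmul_piAntidiag_univ r two_ne_zero, sum_map]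
  simp [pow_mul]

theorem integral_sum_mul_pow_two_mul_le (hε : IsKWiseRademacher μ k ε) (hk : k ≠ 0)
    (a : ι → ℝ) {r : ℕ} (hr : 2 * r ≤ k) :
    ∫ ω, (∑ i, a i * ε i ω) ^ (2 * r) ∂μ ≤ (2 * r)! / (2 ^ r * r !) * (∑ i, a i ^ 2) ^ r := by
  rw [hε.integral_sum_mul_pow_two_mul hk a hr]
  exact sum_multinomial_two_nsmul_mul_prod_pow_le (fun i ↦ sq_nonneg (a i)) r

end IsKWiseRademacher

theorem abs_sum_mul_le_sqrt_card_mul_sqrt {ι : Type*} (s : Finset ι) (a x : ι → ℝ)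
    (hx : ∀ i ∈ s, |x i| ≤ 1) : |∑ i ∈ s, a i * x i| ≤ √(#s) * √(∑ i ∈ s, a i ^ 2) := by
  calc |∑ i ∈ s, a i * x i| ≤ ∑ i ∈ s, |x i| * |a i| :=
        (abs_sum_le_sum_abs _ _).trans_eq (sum_congr rfl fun i _ ↦ by rw [abs_mul, mul_comm])
    _ ≤ √(∑ i ∈ s, |x i| ^ 2) * √(∑ i ∈ s, |a i| ^ 2) := Real.sum_mul_le_sqrt_mul_sqrt _ _ _
    _ ≤ √(#s) * √(∑ i ∈ s, a i ^ 2) := by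
        simp_rw [sq_abs]
        gcongr
        simpa using sum_le_card_nsmul s (fun i ↦ x i ^ 2) 1 fun i hi ↦
          (sq_le_one_iff_abs_le_one _).2 (hx i hi)

theorem integral_rpow_abs_le_of_ae_abs_le {α : Type*} [MeasurableSpace α] {μ : Measure α}
    [IsFiniteMeasure μ] {f : α → ℝ} {B p q : ℝ} (hf : AEStronglyMeasurable f μ)
    (hfB : ∀ᵐ x ∂μ, |f x| ≤ B) (hq : 0 ≤ q) (hqp : q ≤ p) :
    ∫ x, |f x| ^ p ∂μ ≤ B ^ (p - q) * ∫ x, |f x| ^ q ∂μ := by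
  have hint : Integrable (fun x ↦ |f x| ^ q) μ := by
    refine .of_bound (hf.aemeasurable.abs.pow_const q).aestronglyMeasurable (B ^ q) ?_
    filter_upwards [hfB] with x hx
    rw [Real.norm_of_nonneg (by positivity)]
    exact Real.rpow_le_rpow (abs_nonneg _) hx hq
  rw [← integral_const_mul]
  refine integral_mono_of_nonneg (ae_of_all _ fun x ↦ by positivity) (hint.const_mul _) ?_
  filter_upwards [hfB] with x hx
  calc |f x| ^ p = |f x| ^ (p - q) * |f x| ^ q := by
        rw [← Real.rpow_add_of_nonneg (abs_nonneg _) (sub_nonneg.2 hqp) hq, sub_add_cancel]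
    _ ≤ B ^ (p - q) * |f x| ^ q := by gcongr

theorem rpow_integral_rpow_abs_le_of_ae_abs_le {α : Type*} [MeasurableSpace α] {μ : Measure α}
    [IsFiniteMeasure μ] {f : α → ℝ} {A B p q : ℝ} (hf : AEStronglyMeasurable f μ)
    (hfB : ∀ᵐ x ∂μ, |f x| ≤ B) (hfA : ∫ x, |f x| ^ q ∂μ ≤ A ^ q) (hA : 0 ≤ A) (hB : 0 ≤ B)
    (hq : 0 ≤ q) (hqp : q ≤ p) (hp : 0 < p) :
    (∫ x, |f x| ^ p ∂μ) ^ (1 / p) ≤ A ^ (q / p) * B ^ (1 - q / p) := by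
  rw [one_div, Real.rpow_inv_le_iff_of_pos (integral_nonneg fun x ↦ by positivity)
    (by positivity) hp, Real.mul_rpow (by positivity) (by positivity), ← Real.rpow_mul hA,
    ← Real.rpow_mul hB, div_mul_cancel₀ _ hp.ne', sub_mul, one_mul, div_mul_cancel₀ _ hp.ne',
    mul_comm]
  exact (integral_rpow_abs_le_of_ae_abs_le hf hfB hq hqp).trans (by gcongr)

theorem khintchineConst_nonneg (k : ℕ) : 0 ≤ khintchineConst k :=
  Real.rpow_nonneg (by positivity) _

theorem khintchineConst_pow_self {k : ℕ} (hk : k ≠ 0) :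
    khintchineConst k ^ k = k ! / (2 ^ (k / 2) * (k / 2)!) := by
  rw [← Real.rpow_natCast]
  exact Real.rpow_inv_rpow (by positivity) (by exact_mod_cast hk)

/-- interpolation bound `C(N,p,k) ≤ C(k)^{k/p} N^{1/2 - k/(2p)}` for even `k`,
`p ≥ k ≥ 2`, applied to any `k`-wise independent Rademacher vector and any `a ∈ ℝ^N`. -/
theorem khintchine_kwise_upper_bound {Ω : Type*} [MeasurableSpace Ω]
    (μ : Measure Ω) [IsProbabilityMeasure μ] {N : ℕ} (k : ℕ) (hk2 : 2 ≤ k) (hke : Even k)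
    (p : ℝ) (hpk : (k : ℝ) ≤ p) (ε : Fin N → Ω → ℝ) (hε : IsKWiseRademacher μ k ε)
    (a : Fin N → ℝ) :
    (∫ ω, |∑ i, a i * ε i ω| ^ p ∂μ) ^ (1 / p) ≤
      khintchineConst k ^ ((k : ℝ) / p) * (N : ℝ) ^ ((1 : ℝ) / 2 - (k : ℝ) / (2 * p)) *
        Real.sqrt (∑ i, (a i) ^ 2) := by
  obtain ⟨r, rfl⟩ := hke.two_dvd
  have hk : 2 * r ≠ 0 := by omega
  have hp : 0 < p := lt_of_lt_of_le (by exact_mod_cast Nat.pos_of_ne_zero hk) hpk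
  set K : ℝ := ((2 * r : ℕ) : ℝ)
  set C := khintchineConst (2 * r)
  set s := √(∑ i, a i ^ 2)
  have hC : 0 ≤ C := khintchineConst_nonneg _
  have hs : 0 ≤ s := Real.sqrt_nonneg _
  have hbound : ∀ᵐ ω ∂μ, |∑ i, a i * ε i ω| ≤ √N * s := by
    filter_upwards [hε.ae_forall_eq_one_or_neg_one hk] with ω hω
    simpa using abs_sum_mul_le_sqrt_card_mul_sqrt univ a (ε · ω) fun i _ ↦ by
      rcases hω i with h | h <;> simp [h]
  have hmoment : ∫ ω, |∑ i, a i * ε i ω| ^ K ∂μ ≤ (C * s) ^ K := by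
    simp_rw [K, Real.rpow_natCast, (even_two_mul r).pow_abs]
    rw [mul_pow, khintchineConst_pow_self hk, Nat.mul_div_cancel_left r two_pos, pow_mul,
      Real.sq_sqrt (sum_nonneg fun i _ ↦ sq_nonneg (a i))]
    exact hε.integral_sum_mul_pow_two_mul_le hk a le_rfl
  have hmeas := hε.1
  calc _ ≤ (C * s) ^ (K / p) * (√N * s) ^ (1 - K / p) :=
        rpow_integral_rpow_abs_le_of_ae_abs_le (by fun_prop) hbound hmoment (by positivity)
          (by positivity) (Nat.cast_nonneg _) hpk hp
    _ = C ^ (K / p) * N ^ (1 / 2 - K / (2 * p)) * s := by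
        rw [Real.mul_rpow hC hs, Real.mul_rpow (by positivity) hs, Real.sqrt_eq_rpow,
          ← Real.rpow_mul N.cast_nonneg, mul_mul_mul_comm, ← Real.rpow_add' hs (by simp),
          add_sub_cancel, Real.rpow_one]
        ring_nf
end
end

section
/- Under the hypotheses of the equality case (N even, p > 2, ε' pairwise independent Rademacher, equality (E|∑a'ᵢε'ᵢ|^p)^{1/p} = N^{1/2−1/p}‖a'‖₂), the law P' of ε' satisfies P'{ε'ᵢ = sgn(a'ᵢ) for all i} = P'{ε'ᵢ = −sgn(a'ᵢ) for all i} = 1/(2N). -/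
open MeasureTheory ENNReal

noncomputable section

/-! Write `S = ∑ aᵢ εᵢ`, `A = ∑ aᵢ²` and `c = √(N A)`. Pairwise independence gives `E S = 0` and
`E S² = A`, and Cauchy–Schwarz gives `|S| ≤ ∑ |aᵢ| ≤ c` almost surely. Since
`|S|^p ≤ c^(p-2) S²`, with equality only where `|S| ∈ {0, c}`, the hypothesis
`E |S|^p = c^(p-2) A` forces `S ∈ {0, c, -c}` almost surely. There the indicator of `{S = ±c}`
is the polynomial `(S² ± c S) / (2 c²)`, so both extreme values have probability
`A / (2 c²) = 1 / (2N)`. In particular `S = c` occurs, so `∑ |aᵢ| = c`, which rules out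
`aᵢ = 0`; and then `S = ±c` exactly when `εᵢ = ± sign aᵢ` for every `i`. -/

lemma rpow_eq_rpow_sub_two_mul_sq {x p : ℝ} (hx : 0 ≤ x) (hp : p ≠ 0) :
    x ^ p = x ^ (p - 2) * x ^ 2 := by
  rw [← Real.rpow_two, ← Real.rpow_add' hx (by simpa using hp), sub_add_cancel]

lemma rpow_le_rpow_sub_two_mul_sq {x c p : ℝ} (hx : 0 ≤ x) (hxc : x ≤ c) (hp : 2 ≤ p) :
    x ^ p ≤ c ^ (p - 2) * x ^ 2 := by
  rw [rpow_eq_rpow_sub_two_mul_sq hx (by positivity)]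
  gcongr

lemma eq_zero_or_eq_of_rpow_eq_rpow_sub_two_mul_sq {x c p : ℝ} (hx : 0 ≤ x) (hxc : x ≤ c)
    (hp : 2 < p) (h : x ^ p = c ^ (p - 2) * x ^ 2) : x = 0 ∨ x = c := by
  refine or_iff_not_imp_left.mpr fun hx0 => ?_
  rw [rpow_eq_rpow_sub_two_mul_sq hx (by positivity)] at h
  exact (Real.rpow_left_inj hx (hx.trans hxc) (by linarith)).mp
    (mul_right_cancel₀ (pow_ne_zero 2 hx0) h)

lemma rpow_mul_sqrt_rpow_eq {N A p : ℝ} (hN : 0 ≤ N) (hA : 0 ≤ A) (hp : p ≠ 0) :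
    (N ^ (1 / 2 - 1 / p) * √A) ^ p = √(N * A) ^ (p - 2) * A := by
  rw [Real.mul_rpow (by positivity) (by positivity), ← Real.rpow_mul hN,
    Real.sqrt_eq_rpow, Real.sqrt_eq_rpow, ← Real.rpow_mul hA, ← Real.rpow_mul (by positivity),
    Real.mul_rpow hN hA, mul_assoc]
  rw [show (1 / 2 - 1 / p) * p = 1 / 2 * (p - 2) by field_simp,
    show 1 / 2 * p = 1 / 2 * (p - 2) + 1 by ring,
    Real.rpow_add_one' hA (by contrapose! hp; linarith)]

lemma sum_mul_eq_sum_abs_iff {ι : Type*} [Fintype ι] {a x : ι → ℝ} (ha : ∀ i, a i ≠ 0)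
    (hx : ∀ i, |x i| ≤ 1) : ∑ i, a i * x i = ∑ i, |a i| ↔ ∀ i, x i = Real.sign (a i) := by
  have hsign : ∀ i, a i * Real.sign (a i) = |a i| := fun i => by
    rcases (ha i).lt_or_gt with h | h
    · rw [Real.sign_of_neg h, abs_of_neg h, mul_neg_one]
    · rw [Real.sign_of_pos h, abs_of_pos h, mul_one]
  have hle : ∀ i ∈ Finset.univ, a i * x i ≤ |a i| := fun i _ =>
    calc a i * x i ≤ |a i| * |x i| := by rw [← abs_mul]; exact le_abs_self _
      _ ≤ |a i| := mul_le_of_le_one_right (abs_nonneg _) (hx i)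
  rw [Finset.sum_eq_sum_iff_of_le hle]
  refine forall_congr' fun i => ?_
  rw [← hsign i, imp_iff_right (Finset.mem_univ i)]
  exact mul_right_inj' (ha i)

lemma sum_sq_pos_of_ne_zero {ι : Type*} [Fintype ι] {a : ι → ℝ} (ha : a ≠ 0) :
    0 < ∑ i, a i ^ 2 := by
  obtain ⟨j, hj⟩ := Function.ne_iff.mp ha
  exact Finset.sum_pos' (fun i _ => sq_nonneg _) ⟨j, Finset.mem_univ j, sq_pos_of_ne_zero hj⟩

lemma sum_abs_le_sqrt_card_mul_sum_sq {ι : Type*} [Fintype ι] (a : ι → ℝ) :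
    ∑ i, |a i| ≤ √(Fintype.card ι * ∑ i, a i ^ 2) :=
  Real.le_sqrt_of_sq_le (by
    simpa using sq_sum_le_card_mul_sum_sq (s := Finset.univ) (f := fun i => |a i|))

lemma sq_sum_abs_lt_card_mul_sum_sq {ι : Type*} [Fintype ι] {a : ι → ℝ} (ha : a ≠ 0) {j : ι}
    (hj : a j = 0) : (∑ i, |a i|) ^ 2 < Fintype.card ι * ∑ i, a i ^ 2 := by
  classical
  have hpos := sum_sq_pos_of_ne_zero ha
  have herase : ∀ f : ι → ℝ, f j = 0 → ∑ i, f i = ∑ i ∈ Finset.univ.erase j, f i :=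
    fun f hf => by rw [← Finset.sum_erase_add _ _ (Finset.mem_univ j), hf, add_zero]
  calc (∑ i, |a i|) ^ 2 = (∑ i ∈ Finset.univ.erase j, |a i|) ^ 2 := by
        rw [herase _ (by simp [hj])]
    _ ≤ (Finset.univ.erase j).card * ∑ i ∈ Finset.univ.erase j, |a i| ^ 2 :=
        sq_sum_le_card_mul_sum_sq
    _ = (Fintype.card ι - 1) * ∑ i, a i ^ 2 := by
        rw [herase (fun i => a i ^ 2) (by simp [hj]), Finset.card_erase_of_mem (Finset.mem_univ j),
          Finset.card_univ, Nat.cast_sub (Fintype.card_pos_iff.mpr ⟨j⟩)]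
        simp
    _ < Fintype.card ι * ∑ i, a i ^ 2 := by linarith

section BoundedFunctions

variable {Ω : Type*} [MeasurableSpace Ω] {μ : Measure Ω}

lemma le_of_ae_le_of_measure_ne_zero {f : Ω → ℝ} {M c : ℝ} (hM : ∀ᵐ ω ∂μ, f ω ≤ M)
    (hc : μ {ω | f ω = c} ≠ 0) : c ≤ M := by
  by_contra! hlt
  exact hc (measure_eq_zero_iff_ae_notMem.mpr (hM.mono fun ω hω (hωc : f ω = c) => by linarith))

variable [IsFiniteMeasure μ]

lemma ae_eq_zero_or_abs_eq_of_integral_rpow_eq {f : Ω → ℝ} (hf : Measurable f) {c p : ℝ}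
    (hp : 2 < p) (hfc : ∀ᵐ ω ∂μ, |f ω| ≤ c)
    (h : ∫ ω, |f ω| ^ p ∂μ = c ^ (p - 2) * ∫ ω, f ω ^ 2 ∂μ) :
    ∀ᵐ ω ∂μ, f ω = 0 ∨ |f ω| = c := by
  have hle : ∀ᵐ ω ∂μ, |f ω| ^ p ≤ c ^ (p - 2) * f ω ^ 2 := by
    filter_upwards [hfc] with ω hω
    simpa using rpow_le_rpow_sub_two_mul_sq (abs_nonneg _) hω hp.le
  have hint_sq : Integrable (fun ω => c ^ (p - 2) * f ω ^ 2) μ :=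
    (Integrable.of_bound (hf.pow_const 2).aestronglyMeasurable (c ^ 2)
      (by filter_upwards [hfc] with ω hω
          simpa using pow_le_pow_left₀ (abs_nonneg _) hω 2)).const_mul _
  have hint_rpow : Integrable (fun ω => |f ω| ^ p) μ :=
    hint_sq.mono' (hf.abs.pow_const p).aestronglyMeasurable
      (by filter_upwards [hle] with ω hω
          rwa [Real.norm_of_nonneg (by positivity)])
  have hgap : (fun ω => c ^ (p - 2) * f ω ^ 2 - |f ω| ^ p) =ᵐ[μ] 0 := by
    refine (integral_eq_zero_iff_of_nonneg_ae (by filter_upwards [hle] with ω hω; simpa using hω)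
      (hint_sq.sub hint_rpow)).mp ?_
    simp only [Pi.sub_apply]
    rw [integral_sub hint_sq hint_rpow, integral_const_mul, h, sub_self]
  filter_upwards [hgap, hfc] with ω hω hωc
  rw [← abs_eq_zero]
  exact eq_zero_or_eq_of_rpow_eq_rpow_sub_two_mul_sq (abs_nonneg _) hωc hp
    (by simp only [Pi.zero_apply, sub_eq_zero] at hω; rw [sq_abs]; exact hω.symm)

lemma measureReal_eq_of_ae_eq_zero_or_abs_eq {f : Ω → ℝ} (hf : Measurable f) {c : ℝ} (hc : c ≠ 0)
    (h : ∀ᵐ ω ∂μ, f ω = 0 ∨ |f ω| = c) :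
    μ.real {ω | f ω = c} = (∫ ω, f ω ^ 2 ∂μ + c * ∫ ω, f ω ∂μ) / (2 * c ^ 2) := by
  -- on `{0, c, -c}` the indicator of `{c}` is the interpolating polynomial `(x² + c x) / (2 c²)`
  have hind : {ω | f ω = c}.indicator 1 =ᵐ[μ] fun ω => (f ω ^ 2 + c * f ω) / (2 * c ^ 2) := by
    filter_upwards [h] with ω hω
    rcases hω with h0 | habs
    · simp [h0, hc.symm]
    · rcases (abs_eq (habs ▸ abs_nonneg _)).mp habs with hpos | hneg
      · simp [hpos]
        field_simp
        ring
      · have hne : f ω ≠ c := by rw [hneg]; contrapose! hc; linarith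
        rw [Set.indicator_of_notMem (show ω ∉ {ω | f ω = c} from hne), hneg]
        ring
  have hbdd : ∀ᵐ ω ∂μ, ‖f ω‖ ≤ |c| := by
    filter_upwards [h] with ω hω
    rcases hω with h0 | habs
    · simp [h0]
    · simp [← habs]
  have hint : Integrable f μ := .of_bound hf.aestronglyMeasurable _ hbdd
  have hint_sq : Integrable (fun ω => f ω ^ 2) μ :=
    .of_bound (hf.pow_const 2).aestronglyMeasurable (|c| ^ 2) (by
      filter_upwards [hbdd] with ω hω
      simpa using pow_le_pow_left₀ (norm_nonneg _) hω 2)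
  have hmeas : MeasurableSet {ω | f ω = c} := hf (measurableSet_singleton c)
  rw [← integral_indicator_one hmeas, integral_congr_ae hind,
    integral_div, integral_add hint_sq (hint.const_mul c), integral_const_mul]

end BoundedFunctions

namespace IsKWiseRademacher

variable {Ω ι : Type*} [MeasurableSpace Ω] {μ : Measure Ω} [DecidableEq ι] {k : ℕ}
  {ε : ι → Ω → ℝ}

lemma measure_setOf_eq (hε : IsKWiseRademacher μ k ε) (hk : 1 ≤ k) (i : ι) {v : ℝ}
    (hv : v = 1 ∨ v = -1) : μ {ω | ε i ω = v} = 2⁻¹ := by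
  simpa using hε.2 {i} (by simpa using hk) (fun _ => v) (fun _ => hv)

lemma measure_setOf_eq_one_inter (hε : IsKWiseRademacher μ k ε) (hk : 2 ≤ k) {i j : ι}
    (hij : i ≠ j) : μ ({ω | ε i ω = 1} ∩ {ω | ε j ω = 1}) = 4⁻¹ := by
  have hcard : ({i, j} : Finset ι).card = 2 := Finset.card_pair hij
  have h := hε.2 {i, j} (hcard ▸ hk) (fun _ => 1) (fun _ => Or.inl rfl)
  rw [hcard] at h
  convert h using 2
  · ext ω; simp
  · norm_num [← ENNReal.inv_pow]

lemma measureReal_setOf_eq_one (hε : IsKWiseRademacher μ k ε) (hk : 1 ≤ k) (i : ι) :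
    μ.real {ω | ε i ω = 1} = 2⁻¹ := by
  simp [measureReal_def, hε.measure_setOf_eq hk i (.inl rfl)]

lemma measureReal_setOf_eq_one_inter (hε : IsKWiseRademacher μ k ε) (hk : 2 ≤ k) {i j : ι}
    (hij : i ≠ j) : μ.real ({ω | ε i ω = 1} ∩ {ω | ε j ω = 1}) = 4⁻¹ := by
  simp [measureReal_def, hε.measure_setOf_eq_one_inter hk hij]

variable [IsProbabilityMeasure μ]

lemma ae_eq_one_or_eq_neg_one (hε : IsKWiseRademacher μ k ε) (hk : 1 ≤ k) (i : ι) :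
    ∀ᵐ ω ∂μ, ε i ω = 1 ∨ ε i ω = -1 := by
  have hmeas : ∀ v, MeasurableSet {ω | ε i ω = v} := fun v => hε.1 i (measurableSet_singleton v)
  refine (ae_mem_iff_measure_eq ((hmeas 1).union (hmeas (-1))).nullMeasurableSet).mpr ?_
  rw [measure_union _ (hmeas (-1)), hε.measure_setOf_eq hk i (.inl rfl),
    hε.measure_setOf_eq hk i (.inr rfl), ENNReal.inv_two_add_inv_two, measure_univ]
  exact Set.disjoint_left.mpr fun ω (h1 : ε i ω = 1) (h2 : ε i ω = -1) => by linarith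

lemma ae_eq_two_mul_indicator_sub_one (hε : IsKWiseRademacher μ k ε) (hk : 1 ≤ k) (i : ι) :
    ε i =ᵐ[μ] fun ω => 2 * {ω | ε i ω = 1}.indicator 1 ω - 1 := by
  filter_upwards [hε.ae_eq_one_or_eq_neg_one hk i] with ω hω
  rcases hω with h | h <;> norm_num [Set.indicator_apply, h]

lemma integrable (hε : IsKWiseRademacher μ k ε) (hk : 1 ≤ k) (i : ι) : Integrable (ε i) μ :=
  .of_bound (hε.1 i).aestronglyMeasurable 1 <| by
    filter_upwards [hε.ae_eq_one_or_eq_neg_one hk i] with ω hω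
    rcases hω with h | h <;> simp [h]

lemma integral_eq_zero (hε : IsKWiseRademacher μ k ε) (hk : 1 ≤ k) (i : ι) :
    ∫ ω, ε i ω ∂μ = 0 := by
  have hmeas : MeasurableSet {ω | ε i ω = 1} := hε.1 i (measurableSet_singleton 1)
  rw [integral_congr_ae (hε.ae_eq_two_mul_indicator_sub_one hk i),
    integral_sub (((integrable_const 1).indicator hmeas).const_mul 2) (integrable_const 1),
    integral_const_mul, integral_indicator_one hmeas, hε.measureReal_setOf_eq_one hk i]
  simp

lemma integral_mul_eq_zero (hε : IsKWiseRademacher μ k ε) (hk : 2 ≤ k) {i j : ι} (hij : i ≠ j) :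
    ∫ ω, ε i ω * ε j ω ∂μ = 0 := by
  have hk1 : 1 ≤ k := by omega
  set P := fun l => {ω | ε l ω = 1}
  have hP : ∀ l, MeasurableSet (P l) := fun l => hε.1 l (measurableSet_singleton 1)
  have hI : ∀ s, MeasurableSet s → ∀ a : ℝ, Integrable (fun ω => a * s.indicator 1 ω) μ :=
    fun s hs a => ((integrable_const 1).indicator hs).const_mul a
  have hIij := hI _ ((hP i).inter (hP j)) 4
  have hIi := hI _ (hP i) 2
  have hIj := hI _ (hP j) 2
  -- through `εₗ = 2 𝟙{εₗ = 1} - 1`, only the all-ones pattern on `{i, j}` is needed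
  have hexpand : (fun ω => ε i ω * ε j ω) =ᵐ[μ] fun ω =>
      4 * (P i ∩ P j).indicator 1 ω - 2 * (P i).indicator 1 ω - 2 * (P j).indicator 1 ω + 1 := by
    filter_upwards [hε.ae_eq_two_mul_indicator_sub_one hk1 i,
      hε.ae_eq_two_mul_indicator_sub_one hk1 j] with ω hi hj
    rw [hi, hj, Set.inter_indicator_one, Pi.mul_apply]
    ring
  have hIij_i : Integrable
      (fun ω => (4 * (P i ∩ P j).indicator 1 ω - 2 * (P i).indicator 1 ω : ℝ)) μ :=
    hIij.sub hIi
  have hIij_i_j : Integrable (fun ω => (4 * (P i ∩ P j).indicator 1 ω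
      - 2 * (P i).indicator 1 ω - 2 * (P j).indicator 1 ω : ℝ)) μ := hIij_i.sub hIj
  rw [integral_congr_ae hexpand, integral_add hIij_i_j (integrable_const 1),
    integral_sub hIij_i hIj, integral_sub hIij hIi,
    integral_const_mul, integral_const_mul, integral_const_mul, integral_indicator_one (hP i),
    integral_indicator_one (hP j), integral_indicator_one ((hP i).inter (hP j)),
    hε.measureReal_setOf_eq_one hk1 i, hε.measureReal_setOf_eq_one hk1 j,
    hε.measureReal_setOf_eq_one_inter hk hij]
  simp

lemma integrable_mul (hε : IsKWiseRademacher μ k ε) (hk : 1 ≤ k) (i j : ι) :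
    Integrable (fun ω => ε i ω * ε j ω) μ :=
  .of_bound ((hε.1 i).mul (hε.1 j)).aestronglyMeasurable 1 <| by
    filter_upwards [hε.ae_eq_one_or_eq_neg_one hk i, hε.ae_eq_one_or_eq_neg_one hk j]
      with ω hi hj
    rcases hi with hi | hi <;> rcases hj with hj | hj <;> simp [hi, hj]

lemma integral_mul (hε : IsKWiseRademacher μ k ε) (hk : 2 ≤ k) (i j : ι) :
    ∫ ω, ε i ω * ε j ω ∂μ = if i = j then 1 else 0 := by
  split_ifs with hij
  · subst hij
    have hsq : (fun ω => ε i ω * ε i ω) =ᵐ[μ] fun _ => 1 := by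
      filter_upwards [hε.ae_eq_one_or_eq_neg_one (by omega) i] with ω hω
      rcases hω with h | h <;> simp [h]
    simp [integral_congr_ae hsq]
  · exact hε.integral_mul_eq_zero hk hij

variable [Fintype ι]

lemma ae_abs_sum_mul_le (hε : IsKWiseRademacher μ k ε) (hk : 1 ≤ k) (a : ι → ℝ) :
    ∀ᵐ ω ∂μ, |∑ i, a i * ε i ω| ≤ ∑ i, |a i| := by
  filter_upwards [ae_all_iff.mpr (hε.ae_eq_one_or_eq_neg_one hk)] with ω hω
  refine (Finset.abs_sum_le_sum_abs _ _).trans (Finset.sum_le_sum fun i _ => ?_)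
  rcases hω i with h | h <;> simp [h]

lemma integral_sum_mul (hε : IsKWiseRademacher μ k ε) (hk : 1 ≤ k) (a : ι → ℝ) :
    ∫ ω, ∑ i, a i * ε i ω ∂μ = 0 := by
  rw [integral_finsetSum _ fun i _ => (hε.integrable hk i).const_mul (a i)]
  simp [integral_const_mul, hε.integral_eq_zero hk]

lemma integral_sum_mul_sq (hε : IsKWiseRademacher μ k ε) (hk : 2 ≤ k) (a : ι → ℝ) :
    ∫ ω, (∑ i, a i * ε i ω) ^ 2 ∂μ = ∑ i, a i ^ 2 := by
  have hint : ∀ i j, Integrable (fun ω => a i * a j * (ε i ω * ε j ω)) μ :=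
    fun i j => (hε.integrable_mul (by omega) i j).const_mul _
  have hexpand : ∀ ω, (∑ i, a i * ε i ω) ^ 2 = ∑ i, ∑ j, a i * a j * (ε i ω * ε j ω) := by
    intro ω
    rw [sq, Finset.sum_mul_sum]
    simp only [mul_mul_mul_comm]
  simp_rw [hexpand]
  rw [integral_finsetSum _ fun i _ => integrable_finsetSum _ fun j _ => hint i j]
  simp_rw [integral_finsetSum _ fun j _ => hint _ j, integral_const_mul, hε.integral_mul hk]
  simp [sq]

lemma measureReal_sum_mul_eq (hε : IsKWiseRademacher μ k ε) (hk : 2 ≤ k) (a : ι → ℝ) {c : ℝ}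
    (hc : c ≠ 0) (h : ∀ᵐ ω ∂μ, ∑ i, a i * ε i ω = 0 ∨ |∑ i, a i * ε i ω| = c) :
    μ.real {ω | ∑ i, a i * ε i ω = c} = (∑ i, a i ^ 2) / (2 * c ^ 2) ∧
      μ.real {ω | ∑ i, a i * ε i ω = -c} = (∑ i, a i ^ 2) / (2 * c ^ 2) := by
  have hS : Measurable fun ω => ∑ i, a i * ε i ω :=
    Finset.measurable_sum _ fun i _ => (hε.1 i).const_mul (a i)
  constructor
  · rw [measureReal_eq_of_ae_eq_zero_or_abs_eq hS hc h, hε.integral_sum_mul_sq hk,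
      hε.integral_sum_mul (by omega), mul_zero, add_zero]
  · have hneg := measureReal_eq_of_ae_eq_zero_or_abs_eq hS.neg hc
      (by filter_upwards [h] with ω hω; simpa using hω)
    simp only [Pi.neg_apply, neg_eq_iff_eq_neg, neg_sq, integral_neg, hε.integral_sum_mul_sq hk,
      hε.integral_sum_mul (by omega)] at hneg
    simpa using hneg

lemma setOf_forall_eq_sign_ae_eq (hε : IsKWiseRademacher μ k ε) (hk : 1 ≤ k) {a : ι → ℝ}
    (ha : ∀ i, a i ≠ 0) :
    {ω | ∀ i, ε i ω = Real.sign (a i)} =ᵐ[μ] {ω | ∑ i, a i * ε i ω = ∑ i, |a i|} := by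
  refine Filter.eventuallyEq_set.mpr ?_
  filter_upwards [ae_all_iff.mpr (hε.ae_eq_one_or_eq_neg_one hk)] with ω hω
  refine (sum_mul_eq_sum_abs_iff ha fun i => ?_).symm
  rcases hω i with h | h <;> simp [h]

lemma setOf_forall_eq_neg_sign_ae_eq (hε : IsKWiseRademacher μ k ε) (hk : 1 ≤ k) {a : ι → ℝ}
    (ha : ∀ i, a i ≠ 0) :
    {ω | ∀ i, ε i ω = -Real.sign (a i)} =ᵐ[μ] {ω | ∑ i, a i * ε i ω = -∑ i, |a i|} := by
  have h := hε.setOf_forall_eq_sign_ae_eq hk (a := -a) fun i => neg_ne_zero.mpr (ha i)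
  simpa [Real.sign_neg, Finset.sum_neg_distrib, neg_eq_iff_eq_neg] using h

end IsKWiseRademacher

theorem equality_case_extreme_prob_general {Ω : Type*} [MeasurableSpace Ω]
    (μ : Measure Ω) [IsProbabilityMeasure μ] {N : ℕ} (p : ℝ) (hp : 2 < p)
    (ε' : Fin N → Ω → ℝ) (hε : IsKWiseRademacher μ 2 ε')
    (a' : Fin N → ℝ) (ha : a' ≠ 0)
    (heq : (∫ ω, |∑ i, a' i * ε' i ω| ^ p ∂μ) ^ (1 / p) =
      (N : ℝ) ^ ((1 : ℝ) / 2 - 1 / p) * Real.sqrt (∑ i, (a' i) ^ 2)) :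
    μ {ω | ∀ i, ε' i ω = Real.sign (a' i)} = ((2 * N : ℕ) : ℝ≥0∞)⁻¹ ∧
    μ {ω | ∀ i, ε' i ω = -Real.sign (a' i)} = ((2 * N : ℕ) : ℝ≥0∞)⁻¹ := by
  set S := fun ω => ∑ i, a' i * ε' i ω
  set A := ∑ i, a' i ^ 2
  set c := √(N * A)
  have hN : 0 < N := Nat.pos_of_ne_zero fun h => ha (by subst h; exact Subsingleton.elim _ _)
  have hA : 0 < A := sum_sq_pos_of_ne_zero ha
  have hc : 0 < c := by positivity
  have hSM : ∀ᵐ ω ∂μ, |S ω| ≤ ∑ i, |a' i| := hε.ae_abs_sum_mul_le one_le_two a'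
  have hMc : ∑ i, |a' i| ≤ c := by
    simpa only [Fintype.card_fin] using sum_abs_le_sqrt_card_mul_sum_sq a'
  have hmoment : ∫ ω, |S ω| ^ p ∂μ = c ^ (p - 2) * ∫ ω, S ω ^ 2 ∂μ := by
    rw [hε.integral_sum_mul_sq le_rfl, ← rpow_mul_sqrt_rpow_eq (Nat.cast_nonneg N) hA.le
      (by positivity), ← heq, ← Real.rpow_mul (by positivity), one_div_mul_cancel (by positivity),
      Real.rpow_one]
  have hvals : ∀ᵐ ω ∂μ, S ω = 0 ∨ |S ω| = c :=
    ae_eq_zero_or_abs_eq_of_integral_rpow_eq (Finset.measurable_sum _ fun i _ =>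
      (hε.1 i).const_mul (a' i)) hp (hSM.mono fun _ h => h.trans hMc) hmoment
  obtain ⟨hplus, hminus⟩ := hε.measureReal_sum_mul_eq le_rfl a' hc.ne' hvals
  have hc2 : c ^ 2 = N * A := Real.sq_sqrt (by positivity)
  have hhalf : A / (2 * c ^ 2) = 1 / (2 * N) := by rw [hc2]; field_simp
  have hMc' : ∑ i, |a' i| = c := le_antisymm hMc <| le_of_ae_le_of_measure_ne_zero
    (hSM.mono fun ω h => (le_abs_self _).trans h)
    ((measureReal_ne_zero_iff).mp (by rw [hplus, hhalf]; positivity))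
  have hane : ∀ i, a' i ≠ 0 := fun j hj =>
    (sq_sum_abs_lt_card_mul_sum_sq ha hj).ne (by rw [Fintype.card_fin, ← hc2, hMc'])
  have hreal : ∀ s : Set Ω, μ.real s = 1 / (2 * N) → μ s = ((2 * N : ℕ) : ℝ≥0∞)⁻¹ := by
    intro s hs
    rw [← ofReal_measureReal, hs, one_div, ENNReal.ofReal_inv_of_pos (by positivity)]
    norm_cast
  rw [measure_congr (hε.setOf_forall_eq_sign_ae_eq one_le_two hane),
    measure_congr (hε.setOf_forall_eq_neg_sign_ae_eq one_le_two hane), hMc']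
  exact ⟨hreal _ (hplus.trans hhalf), hreal _ (hminus.trans hhalf)⟩

/-- in the equality case, the two extreme sign patterns each occur with
probability `1/(2N)`. -/
theorem equality_case_extreme_prob {Ω : Type*} [MeasurableSpace Ω]
    (μ : Measure Ω) [IsProbabilityMeasure μ] {N : ℕ} (hNe : Even N) (p : ℝ) (hp : 2 < p)
    (ε' : Fin N → Ω → ℝ) (hε : IsKWiseRademacher μ 2 ε')
    (a' : Fin N → ℝ) (ha : a' ≠ 0)
    (heq : (∫ ω, |∑ i, a' i * ε' i ω| ^ p ∂μ) ^ (1 / p) =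
      (N : ℝ) ^ ((1 : ℝ) / 2 - 1 / p) * Real.sqrt (∑ i, (a' i) ^ 2)) :
    μ {ω | ∀ i, ε' i ω = Real.sign (a' i)} = ((2 * N : ℕ) : ℝ≥0∞)⁻¹ ∧
    μ {ω | ∀ i, ε' i ω = -Real.sign (a' i)} = ((2 * N : ℕ) : ℝ≥0∞)⁻¹ :=
  equality_case_extreme_prob_general μ p hp ε' hε a' ha heq
end
end

section
/- For n ≥ 3, the family {ε_S = ε̄₀∏_{i∈S}ε̄ᵢ : S ⊆ {1,...,n}} is not exchangeable; specifically, the subset {ε̄₀, ε̄₀ε̄₁ε̄₂, ε̄₀ε̄₁ε̄₃, ε̄₀ε̄₂ε̄₃} is not mutually independent (the product of the first three equals the fourth), while {ε̄₀, ε̄₀ε̄₁, ε̄₀ε̄₂, ε̄₀ε̄₃} is mutually independent. Hence the law of (ε_S)_S differs from the exchangeable law P, showing the equality case in C(2^n,p,2) = N^{1/2−1/p} is not unique in law without exchangeability. -/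
open MeasureTheory ENNReal

noncomputable section

/-- `PA N`: uniform measure on the two constant sign vectors `(1,…,1)` and `(−1,…,−1)`. -/
def PA (N : ℕ) : Measure (Fin N → ℝ) :=
  (2 : ℝ≥0∞)⁻¹ • (Measure.dirac (fun _ => 1) + Measure.dirac (fun _ => -1))

/-- `PB N`: uniform measure on the sign vectors with exactly `N/2` coordinates equal to `1`. -/
def PB (N : ℕ) : Measure (Fin N → ℝ) :=
  ((N.choose (N / 2) : ℝ≥0∞))⁻¹ •
    ∑ T ∈ Finset.univ.filter (fun T : Finset (Fin N) => T.card = N / 2),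
      Measure.dirac (fun i => if i ∈ T then (1 : ℝ) else -1)

/-- The measure `P = (1/N) P_a + ((N-1)/N) P_b` on `{−1,1}^N`. -/
def PMeas (N : ℕ) : Measure (Fin N → ℝ) :=
  (N : ℝ≥0∞)⁻¹ • PA N + (((N : ℝ≥0∞) - 1) / N) • PB N

/-! The relation `ε̄₀ · ε̄₀ε̄₁ε̄₂ · ε̄₀ε̄₁ε̄₃ = ε̄₀ε̄₂ε̄₃` holds because `ε̄ᵢ² = 1`, and any product
relation among four variables forbids the sign pattern `(1, 1, 1, -1)`, so they are dependent.
Multiplying `ε̄₁, ε̄₂, ε̄₃` by `ε̄₀` only permutes the sign patterns of `(ε̄₀, …, ε̄₃)`, so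
`ε̄₀, ε̄₀ε̄₁, ε̄₀ε̄₂, ε̄₀ε̄₃` stay independent. Exchangeability would let the swap `{1, 2} ↔ {3}`
carry the almost sure relation `ε_∅ ε_{1} ε_{2} = ε_{1,2}` over to `ε_∅ ε_{1} ε_{2} = ε_{3}`,
which that independence forbids; and `P` charges sign vectors breaking `ε_∅ ε_{1} ε_{2} = ε_{1,2}`,
so it is not the law of `(ε_S)_S`. -/

section Rademacher

variable {Ω ι : Type*} [DecidableEq ι] {X : ι → Ω → ℝ}

lemma mul_eq_iff_eq_mul_of_mul_self_eq_one {M : Type*} [Monoid M] {x a b : M} (hx : x * x = 1) :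
    x * a = b ↔ a = x * b := by
  constructor <;> rintro rfl <;> rw [← mul_assoc, hx, one_mul]

lemma pivot_inter_eq (i₀ : ι) (s : Finset ι) (σ : ι → ℝ) {x : ℝ} (hx : x * x = 1)
    (hs : i₀ ∈ s → σ i₀ = x) :
    {ω | ∀ i ∈ s, (if i = i₀ then X i₀ ω else X i₀ ω * X i ω) = σ i} ∩ {ω | X i₀ ω = x} =
      {ω | ∀ i ∈ insert i₀ s, X i ω = if i = i₀ then x else x * σ i} := by
  ext ω
  simp only [Set.mem_inter_iff, Set.mem_ofPred_eq, Finset.forall_mem_insert, ↓reduceIte]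
  constructor
  · rintro ⟨hY, hx₀⟩
    refine ⟨hx₀, fun i hi => ?_⟩
    have hYi := hY i hi
    split_ifs at hYi ⊢ with hi₀
    · rw [hi₀, hx₀]
    · rwa [hx₀, mul_eq_iff_eq_mul_of_mul_self_eq_one hx] at hYi
  · rintro ⟨hx₀, hX⟩
    refine ⟨fun i hi => ?_, hx₀⟩
    have hXi := hX i hi
    split_ifs at hXi ⊢ with hi₀
    · subst hi₀
      rw [hx₀, hs hi]
    · rwa [hx₀, mul_eq_iff_eq_mul_of_mul_self_eq_one hx]

variable [MeasurableSpace Ω] {μ : Measure Ω} {k : ℕ}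

lemma IsKWiseRademacher.mono {k' : ℕ} (h : IsKWiseRademacher μ k X) (hk : k' ≤ k) :
    IsKWiseRademacher μ k' X :=
  ⟨h.1, fun s hs => h.2 s (hs.trans hk)⟩

lemma IsKWiseRademacher.comp_injective {ι' : Type*} [DecidableEq ι']
    (h : IsKWiseRademacher μ k X) {g : ι' → ι} (hg : Function.Injective g) :
    IsKWiseRademacher μ k (X ∘ g) := by
  refine ⟨fun j => h.1 (g j), fun s hs σ hσ => ?_⟩
  have hext : ∀ i, Function.extend g σ 1 i = 1 ∨ Function.extend g σ 1 i = -1 := by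
    intro i
    by_cases hi : ∃ j, g j = i
    · obtain ⟨j, rfl⟩ := hi
      rw [hg.extend_apply]
      exact hσ j
    · rw [Function.extend_apply' _ _ _ hi]
      exact Or.inl rfl
  have := h.2 (s.map ⟨g, hg⟩) (by simpa using hs) _ hext
  simpa [hg.extend_apply] using this

lemma IsKWiseRademacher.ae_eq_one_or_eq_neg_one_s13 [IsProbabilityMeasure μ]
    (h : IsKWiseRademacher μ k X) (hk : 1 ≤ k) (i : ι) :
    ∀ᵐ ω ∂μ, X i ω = 1 ∨ X i ω = -1 := by
  have hsign : ∀ x : ℝ, x = 1 ∨ x = -1 → μ {ω | X i ω = x} = 2⁻¹ := fun x hx => by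
    simpa using h.2 {i} (by simpa using hk) (fun _ => x) (fun _ => hx)
  have hdisj : Disjoint {ω | X i ω = 1} {ω | X i ω = -1} :=
    Set.disjoint_left.2 fun ω (h1 : X i ω = 1) (h2 : X i ω = -1) => by norm_num [h1] at h2
  have hunion : μ ({ω | X i ω = 1} ∪ {ω | X i ω = -1}) = 1 := by
    rw [measure_union hdisj (h.1 i (measurableSet_singleton _)), hsign 1 (.inl rfl),
      hsign (-1) (.inr rfl), ENNReal.inv_two_add_inv_two]
  refine (ae_iff_measure_eq ((h.1 i (measurableSet_singleton 1)).union
    (h.1 i (measurableSet_singleton (-1)))).nullMeasurableSet).2 ?_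
  rwa [measure_univ]

lemma not_isKWiseRademacher_of_ae_mul_eq (Y : Fin 4 → Ω → ℝ)
    (hY : ∀ᵐ ω ∂μ, Y 0 ω * Y 1 ω * Y 2 ω = Y 3 ω) : ¬ IsKWiseRademacher μ 4 Y := by
  intro h
  have hpattern := h.2 Finset.univ (by simp) ![1, 1, 1, -1] (fun i => by fin_cases i <;> simp)
  rw [Finset.card_univ, Fintype.card_fin] at hpattern
  refine (by simp : (2⁻¹ : ℝ≥0∞) ^ 4 ≠ 0) ?_
  rw [← hpattern]
  refine measure_mono_null (fun ω hω => ?_) (ae_iff.1 hY)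
  intro hrel
  simp only [Finset.mem_univ, forall_const, Set.mem_ofPred_eq] at hω
  rw [hω 0, hω 1, hω 2, hω 3] at hrel
  change (1 : ℝ) * 1 * 1 = -1 at hrel
  norm_num at hrel

lemma IsKWiseRademacher.pivot_mul [Fintype ι] [IsProbabilityMeasure μ]
    (h : IsKWiseRademacher μ k X) (hk : Fintype.card ι ≤ k) (i₀ : ι) :
    IsKWiseRademacher μ k (fun i ω => if i = i₀ then X i₀ ω else X i₀ ω * X i ω) := by
  refine ⟨fun i => ?_, fun s _ σ hσ => ?_⟩
  · dsimp only
    split_ifs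
    exacts [h.1 i₀, (h.1 i₀).mul (h.1 i)]
  have hσ' : ∀ i, σ i * σ i = 1 := fun i => mul_self_eq_one_iff.2 (hσ i)
  have hcyl : ∀ x : ℝ, x * x = 1 →
      μ {ω | ∀ i ∈ insert i₀ s, X i ω = if i = i₀ then x else x * σ i} =
        2⁻¹ ^ (insert i₀ s).card := fun x hx =>
    h.2 _ ((Finset.card_le_univ _).trans hk) _ fun i => by
      split_ifs
      exacts [mul_self_eq_one_iff.1 hx,
        mul_self_eq_one_iff.1 (by rw [mul_mul_mul_comm, hx, hσ', one_mul])]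
  set E : Set Ω := {ω | ∀ i ∈ s, (if i = i₀ then X i₀ ω else X i₀ ω * X i ω) = σ i}
  by_cases hs₀ : i₀ ∈ s
  · have hsub : E ⊆ {ω | X i₀ ω = σ i₀} := fun ω hω => by simpa using hω i₀ hs₀
    rw [← Set.inter_eq_left.2 hsub, pivot_inter_eq i₀ s σ (hσ' i₀) fun _ => rfl,
      hcyl _ (hσ' i₀), Finset.insert_eq_of_mem hs₀]
  · have hdiff : ∀ᵐ ω ∂μ, ω ∈ E \ {ω | X i₀ ω = 1} ↔ ω ∈ E ∩ {ω | X i₀ ω = -1} := by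
      have hk₁ : 1 ≤ k := (Finset.card_pos.2 ⟨i₀, Finset.mem_univ _⟩).trans_le hk
      filter_upwards [h.ae_eq_one_or_eq_neg_one_s13 hk₁ i₀] with ω hω
      rcases hω with hω | hω <;> norm_num [hω]
    rw [← measure_inter_add_sdiff (t := {ω | X i₀ ω = 1}) E (h.1 i₀ (measurableSet_singleton 1)),
      measure_congr (Filter.eventuallyEq_set.2 hdiff),
      pivot_inter_eq i₀ s σ (one_mul 1) (absurd · hs₀),
      pivot_inter_eq i₀ s σ (by norm_num) (absurd · hs₀), hcyl _ (one_mul 1),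
      hcyl _ (by norm_num), Finset.card_insert_of_notMem hs₀, pow_succ, ← mul_add,
      ENNReal.inv_two_add_inv_two, mul_one]

end Rademacher

lemma PMeas_apply_ne_zero {N : ℕ} (hN : 2 ≤ N) {B : Set (Fin N → ℝ)} {T : Finset (Fin N)}
    (hT : T.card = N / 2) (hB : (fun i => if i ∈ T then (1 : ℝ) else -1) ∈ B) :
    PMeas N B ≠ 0 := by
  have hPB : PB N B ≠ 0 := by
    rw [PB, Measure.smul_apply, smul_eq_mul, Measure.finsetSum_apply]
    refine mul_ne_zero (ENNReal.inv_ne_zero.2 (ENNReal.natCast_ne_top _)) (ne_of_gt ?_)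
    calc (0 : ℝ≥0∞) < 1 := one_pos
      _ = Measure.dirac (fun i => if i ∈ T then (1 : ℝ) else -1) B :=
        (Measure.dirac_apply_of_mem hB).symm
      _ ≤ _ := Finset.single_le_sum (f := fun T : Finset (Fin N) =>
          Measure.dirac (fun i => if i ∈ T then (1 : ℝ) else -1) B) (fun _ _ => zero_le)
        (Finset.mem_filter.2 ⟨Finset.mem_univ T, hT⟩)
  have hcoef : ((N : ℝ≥0∞) - 1) / N ≠ 0 :=
    (ENNReal.div_pos_iff.2 ⟨(tsub_pos_of_lt (by exact_mod_cast hN)).ne', by simp⟩).ne'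
  rw [PMeas, Measure.add_apply, Measure.smul_apply, Measure.smul_apply, smul_eq_mul, smul_eq_mul]
  exact (ENNReal.mul_pos hcoef hPB).trans_le le_add_self |>.ne'

section ProductFamily

variable {Ω ι : Type*} [MeasurableSpace Ω] {μ : Measure Ω}

lemma ae_mul_mul_eq_pair [DecidableEq ι] {ε₀ : Ω → ℝ} {ε : ι → Ω → ℝ} {f : Finset ι → Ω → ℝ}
    (hf : ∀ S ω, f S ω = ε₀ ω * ∏ i ∈ S, ε i ω) (h₀ : ∀ᵐ ω ∂μ, ε₀ ω * ε₀ ω = 1) {a b : ι}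
    (hab : a ≠ b) : ∀ᵐ ω ∂μ, f ∅ ω * f {a} ω * f {b} ω = f {a, b} ω := by
  filter_upwards [h₀] with ω hω
  simp only [hf, Finset.prod_empty, Finset.prod_singleton, Finset.prod_pair hab]
  linear_combination (ε₀ ω * ε a ω * ε b ω) * hω

lemma ae_mul_mul_eq_singleton_of_forall_map_perm_eq [DecidableEq ι] {f : Finset ι → Ω → ℝ}
    (hf : ∀ S, Measurable (f S))
    (hinv : ∀ σ : Equiv.Perm (Finset ι),
      μ.map (fun ω S => f (σ S) ω) = μ.map (fun ω S => f S ω))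
    {a b c : ι} (hab : a ≠ b) (hac : a ≠ c) (hbc : b ≠ c)
    (hrel : ∀ᵐ ω ∂μ, f ∅ ω * f {a} ω * f {b} ω = f {a, b} ω) :
    ∀ᵐ ω ∂μ, f ∅ ω * f {a} ω * f {b} ω = f {c} ω := by
  set σ := Equiv.swap ({a, b} : Finset ι) {c}
  have hlaw : ProbabilityTheory.IdentDistrib (fun ω S => f S ω) (fun ω S => f (σ S) ω) μ μ :=
    ⟨(measurable_pi_lambda _ hf).aemeasurable,
      (measurable_pi_lambda _ fun S => hf (σ S)).aemeasurable, (hinv σ).symm⟩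
  have hB : MeasurableSet {x : Finset ι → ℝ | x ∅ * x {a} * x {b} = x {a, b}} :=
    measurableSet_eq_fun (by fun_prop) (by fun_prop)
  have hfix : ∀ S : Finset ι, S ≠ {a, b} → S ≠ {c} → σ S = S := fun _ =>
    Equiv.swap_apply_of_ne_of_ne
  filter_upwards [hlaw.ae_mem_snd hB hrel] with ω hω
  rwa [Equiv.swap_apply_left,
    hfix ∅ (Finset.insert_nonempty _ _).ne_empty.symm (Finset.singleton_nonempty _).ne_empty.symm,
    hfix {a} (by simp [Finset.ext_iff, hab.symm]) (by simpa using hac),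
    hfix {b} (by simp [Finset.ext_iff, hab]) (by simpa using hbc)] at hω

lemma map_ne_PMeas_of_ae_mul_mul_eq {T : Type*} {f : T → Ω → ℝ} (hf : ∀ t, Measurable (f t))
    {N : ℕ} (hN : 6 ≤ N) (e : T ≃ Fin N)
    {t₀ t₁ t₂ t₃ : T} (h₁ : t₁ ≠ t₀) (h₂ : t₂ ≠ t₀) (h₃ : t₃ ≠ t₀)
    (hrel : ∀ᵐ ω ∂μ, f t₀ ω * f t₁ ω * f t₂ ω = f t₃ ω) :
    μ.map (fun ω j => f (e.symm j) ω) ≠ PMeas N := by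
  intro hlaw
  set B := {x : Fin N → ℝ | x (e t₀) * x (e t₁) * x (e t₂) = x (e t₃)}
  have hB : MeasurableSet B := measurableSet_eq_fun (by fun_prop) (by fun_prop)
  have hPB : ∀ᵐ x ∂PMeas N, x ∈ B := by
    rw [← hlaw]
    exact (ae_map_iff (measurable_pi_lambda _ fun j => hf _).aemeasurable hB).2
      (by simpa [B] using hrel)
  obtain ⟨S, hS₀, hS, hcard⟩ := Finset.exists_subsuperset_card_eq (n := N / 2)
    (s := {e t₀}) (t := Finset.univ \ {e t₁, e t₂, e t₃}) (by simp [h₁.symm, h₂.symm, h₃.symm])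
    (by simp; omega)
    (by
      have := Finset.le_card_sdiff {e t₁, e t₂, e t₃} Finset.univ
      have := Finset.card_le_three (a := e t₁) (b := e t₂) (c := e t₃)
      simp only [Finset.card_univ, Fintype.card_fin] at *
      omega)
  refine PMeas_apply_ne_zero (by omega) hcard (B := Bᶜ) ?_ (ae_iff.1 hPB)
  have hout : ∀ i ∈ ({e t₁, e t₂, e t₃} : Finset (Fin N)), i ∉ S := fun i hi hiS =>
    (Finset.mem_sdiff.1 (hS hiS)).2 hi
  simp [B, hS₀ (Finset.mem_singleton_self _), hout]
  norm_num

end ProductFamily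

/-- for `n ≥ 3` the family `ε_S = ε̄₀ ∏_{i∈S} ε̄ᵢ` is not exchangeable:
the quadruple `{ε̄₀, ε̄₀ε̄₁ε̄₂, ε̄₀ε̄₁ε̄₃, ε̄₀ε̄₂ε̄₃}` is not mutually independent while
`{ε̄₀, ε̄₀ε̄₁, ε̄₀ε̄₂, ε̄₀ε̄₃}` is; hence the law of `(ε_S)_S` differs from the exchangeable
optimal law `P`, so the equality case is not unique in law without exchangeability. -/
theorem product_family_not_exchangeable {Ω : Type*} [MeasurableSpace Ω]
    (μ : Measure Ω) [IsProbabilityMeasure μ] {n : ℕ} (hn : 3 ≤ n)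
    (εbar : Fin (n + 1) → Ω → ℝ) (h : IsKWiseRademacher μ (n + 1) εbar)
    (f : Finset (Fin n) → Ω → ℝ)
    (hf : ∀ S ω, f S ω = εbar 0 ω * ∏ i ∈ S, εbar i.succ ω)
    (e : Finset (Fin n) ≃ Fin (2 ^ n)) :
    ¬ IsKWiseRademacher μ 4
        ![εbar 0, fun ω => εbar 0 ω * εbar 1 ω * εbar 2 ω,
          fun ω => εbar 0 ω * εbar 1 ω * εbar 3 ω,
          fun ω => εbar 0 ω * εbar 2 ω * εbar 3 ω] ∧
    (∀ᵐ ω ∂μ, εbar 0 ω * (εbar 0 ω * εbar 1 ω * εbar 2 ω) * (εbar 0 ω * εbar 1 ω * εbar 3 ω)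
        = εbar 0 ω * εbar 2 ω * εbar 3 ω) ∧
    IsKWiseRademacher μ 4
        ![εbar 0, fun ω => εbar 0 ω * εbar 1 ω,
          fun ω => εbar 0 ω * εbar 2 ω, fun ω => εbar 0 ω * εbar 3 ω] ∧
    ¬ (∀ σ : Equiv.Perm (Finset (Fin n)),
        μ.map (fun ω => fun S => f (σ S) ω) = μ.map (fun ω => fun S => f S ω)) ∧
    μ.map (fun ω => fun j : Fin (2 ^ n) => f (e.symm j) ω) ≠ PMeas (2 ^ n) := by
  -- With `n = m + 3`, numerals of `Fin (m + 3 + 1)` reduce, so `Fin.castLE` and `Fin.succ`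
  -- land on them definitionally.
  obtain ⟨m, rfl⟩ := Nat.exists_eq_add_of_le' hn
  have hsq : ∀ i, ∀ᵐ ω ∂μ, εbar i ω * εbar i ω = 1 := fun i =>
    (h.ae_eq_one_or_eq_neg_one_s13 (by omega) i).mono fun _ => mul_self_eq_one_iff.2
  have hmeas : ∀ S, Measurable (f S) := fun S => by
    rw [show f S = _ from funext (hf S)]
    exact (h.1 0).mul (Finset.measurable_prod _ fun i _ => h.1 i.succ)
  have hrel : ∀ᵐ ω ∂μ, εbar 0 ω * (εbar 0 ω * εbar 1 ω * εbar 2 ω) *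
      (εbar 0 ω * εbar 1 ω * εbar 3 ω) = εbar 0 ω * εbar 2 ω * εbar 3 ω := by
    filter_upwards [hsq 0, hsq 1] with ω h₀ h₁
    linear_combination (εbar 0 ω * εbar 2 ω * εbar 3 ω) * (εbar 0 ω * εbar 0 ω * h₁ + h₀)
  have hpivot : IsKWiseRademacher μ 4 ![εbar 0, fun ω => εbar 0 ω * εbar 1 ω,
      fun ω => εbar 0 ω * εbar 2 ω, fun ω => εbar 0 ω * εbar 3 ω] := by
    convert (IsKWiseRademacher.mono (k' := 4)
      (h.comp_injective (Fin.castLE_injective (by omega : 4 ≤ m + 3 + 1))) (by omega)).pivot_mul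
      (by simp) 0 using 1
    ext i ω
    fin_cases i <;> rfl
  have hpair := ae_mul_mul_eq_pair hf (hsq 0) (a := 0) (b := 1) (by simp)
  refine ⟨not_isKWiseRademacher_of_ae_mul_eq _ hrel, hrel, hpivot, fun hinv => ?_,
    map_ne_PMeas_of_ae_mul_mul_eq hmeas ?_ e (by simp) (by simp) (by simp) hpair⟩
  · refine not_isKWiseRademacher_of_ae_mul_eq ![f ∅, f {0}, f {1}, f {⟨2, by omega⟩}]
      (ae_mul_mul_eq_singleton_of_forall_map_perm_eq hmeas hinv (by simp)
        (by simp [Fin.ext_iff]) (by simp [Fin.ext_iff]) hpair) ?_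
    convert hpivot using 5 <;> (try funext ω) <;>
      simp only [hf, Finset.prod_empty, Finset.prod_singleton, mul_one] <;> rfl
  · exact (by norm_num : 6 ≤ 2 ^ 3).trans (Nat.pow_le_pow_right two_pos (by omega))
end
end
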